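/- Suppose R_M ⫫ (M, Y) | (X, A, R_Y) and all conditioning events have positive probability. Then for all values r_y of R_Y and all (x, a, m): P(R_Y = r_y, M = m | X = x, A = a) = P(R_Y = r_y, M = m | X = x, A = a, R_M = 1) · [P(R_M = 1 | X = x, A = a) / P(R_M = 1 | X = x, A = a, R_Y = r_y)]. -/

import Mathlib

open scoped Classical

noncomputable def Pr {Ω : Type*} [Fintype Ω] (p : Ω → ℝ) (E : Ω → Prop) : ℝ :=
  ∑ ω, if E ω then p ω else 0

noncomputable def cPr {Ω : Type*} [Fintype Ω] (p : Ω → ℝ) (E F : Ω → Prop) : ℝ :=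
  Pr p (fun ω => E ω ∧ F ω) / Pr p F

noncomputable def odds {Ω : Type*} [Fintype Ω] (p : Ω → ℝ) (E F : Ω → Prop) : ℝ :=
  cPr p E F / cPr p (fun ω => ¬ E ω) F

/-!
Conditional independence says that, within the stratum `X = x, A = a, R_Y = r_y`,
the probability of `R_M = 1` is the same constant `c = P(R_M = 1 | X, A, R_Y)` on every fibre
`M = m, Y = y`. Summing over `y` gives `P(R_M = 1, R_Y = r_y, M = m, X, A) = c · P(R_Y = r_y, M = m, X, A)`,
and the claimed identity is this equation divided through by `P(X = x, A = a)` and rearranged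
with Bayes' rule.
-/

section Pr

variable {Ω : Type*} [Fintype Ω] (p : Ω → ℝ)

theorem Pr_congr {E F : Ω → Prop} (h : ∀ ω, E ω ↔ F ω) : Pr p E = Pr p F := by
  simp only [Pr, h]

theorem cPr_congr {E E' F F' : Ω → Prop} (hE : ∀ ω, E ω ↔ E' ω) (hF : ∀ ω, F ω ↔ F' ω) :
    cPr p E F = cPr p E' F' := by
  unfold cPr
  rw [Pr_congr p hF, Pr_congr p fun ω => and_congr (hE ω) (hF ω)]

theorem Pr_mono {p : Ω → ℝ} (hp : ∀ ω, 0 ≤ p ω) {E F : Ω → Prop} (h : ∀ ω, E ω → F ω) :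
    Pr p E ≤ Pr p F :=
  Finset.sum_le_sum fun ω _ => by
    by_cases hE : E ω
    · simp [hE, h ω hE]
    · by_cases hF : F ω <;> simp [hE, hF, hp ω]

theorem Pr_eq_sum_Pr_and_eq {𝒴 : Type*} (E : Ω → Prop) (Y : Ω → 𝒴) :
    Pr p E = ∑ y ∈ Finset.univ.image Y, Pr p (fun ω => E ω ∧ Y ω = y) := by
  unfold Pr
  rw [Finset.sum_comm]
  refine Finset.sum_congr rfl fun ω _ => ?_
  by_cases hE : E ω <;> simp [hE]

theorem Pr_and_eq_cPr_mul {E F : Ω → Prop} (hF : Pr p F ≠ 0) :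
    Pr p (fun ω => E ω ∧ F ω) = cPr p E F * Pr p F :=
  (div_mul_cancel₀ _ hF).symm

theorem Pr_and_eq_mul_of_forall_cPr_eq {𝒴 : Type*} (Y : Ω → 𝒴) {E F : Ω → Prop} {c : ℝ}
    (hpos : ∀ y, Pr p (fun ω => F ω ∧ Y ω = y) ≠ 0)
    (hc : ∀ y, cPr p E (fun ω => F ω ∧ Y ω = y) = c) :
    Pr p (fun ω => E ω ∧ F ω) = c * Pr p F := by
  rw [Pr_eq_sum_Pr_and_eq p _ Y, Pr_eq_sum_Pr_and_eq p F Y, Finset.mul_sum]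
  refine Finset.sum_congr rfl fun y _ => ?_
  rw [← hc y, ← Pr_and_eq_cPr_mul p (hpos y)]
  exact Pr_congr p fun _ => and_assoc

theorem cPr_eq_cPr_and_mul_div {E B R : Ω → Prop} {c : ℝ}
    (hB : Pr p B ≠ 0) (hBR : Pr p (fun ω => B ω ∧ R ω) ≠ 0) (hc : c ≠ 0)
    (hjoint : Pr p (fun ω => E ω ∧ B ω ∧ R ω) = c * Pr p (fun ω => E ω ∧ B ω)) :
    cPr p E B = cPr p E (fun ω => B ω ∧ R ω) * (cPr p R B / c) := by
  have hRB : Pr p (fun ω => R ω ∧ B ω) = Pr p (fun ω => B ω ∧ R ω) :=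
    Pr_congr p fun _ => and_comm
  simp only [cPr, hjoint, hRB]
  field_simp

end Pr

theorem S6_density_tilting_general
    {Ω 𝒳 𝒜 ℳ 𝒴 : Type*} [Fintype Ω]
    (p : Ω → ℝ) (hp : ∀ ω, 0 ≤ p ω)
    (X : Ω → 𝒳) (A : Ω → 𝒜) (M : Ω → ℳ) (Y : Ω → 𝒴) (RM RY : Ω → ℕ)
    -- R_M ⫫ (M, Y) ∣ (X, A, R_Y)
    (h : ∀ (rm : ℕ) (m : ℳ) (y : 𝒴) (x : 𝒳) (a : 𝒜) (ry : ℕ),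
      0 < Pr p (fun ω => M ω = m ∧ Y ω = y ∧ X ω = x ∧ A ω = a ∧ RY ω = ry) →
      cPr p (fun ω => RM ω = rm)
          (fun ω => M ω = m ∧ Y ω = y ∧ X ω = x ∧ A ω = a ∧ RY ω = ry)
        = cPr p (fun ω => RM ω = rm) (fun ω => X ω = x ∧ A ω = a ∧ RY ω = ry)) :
    ∀ (ry : ℕ) (x : 𝒳) (a : 𝒜) (m : ℳ),
      0 < Pr p (fun ω => RM ω = 1 ∧ RY ω = ry ∧ X ω = x ∧ A ω = a) →
      (∀ (m' : ℳ) (y' : 𝒴),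
        0 < Pr p (fun ω => M ω = m' ∧ Y ω = y' ∧ X ω = x ∧ A ω = a ∧ RY ω = ry)) →
      cPr p (fun ω => RY ω = ry ∧ M ω = m) (fun ω => X ω = x ∧ A ω = a)
        = cPr p (fun ω => RY ω = ry ∧ M ω = m) (fun ω => X ω = x ∧ A ω = a ∧ RM ω = 1)
          * (cPr p (fun ω => RM ω = 1) (fun ω => X ω = x ∧ A ω = a)
            / cPr p (fun ω => RM ω = 1) (fun ω => X ω = x ∧ A ω = a ∧ RY ω = ry)) := by
  intro ry x a m hpos hposMY
  have pos_of_imp {E : Ω → Prop} (hE : ∀ ω, RM ω = 1 ∧ RY ω = ry ∧ X ω = x ∧ A ω = a → E ω) :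
      Pr p E ≠ 0 :=
    (hpos.trans_le (Pr_mono hp hE)).ne'
  have hc : cPr p (fun ω => RM ω = 1) (fun ω => X ω = x ∧ A ω = a ∧ RY ω = ry) ≠ 0 :=
    div_ne_zero (pos_of_imp fun ω => by tauto) (pos_of_imp fun ω => by tauto)
  have hjoint := Pr_and_eq_mul_of_forall_cPr_eq p Y
    (E := fun ω => RM ω = 1) (F := fun ω => (RY ω = ry ∧ M ω = m) ∧ X ω = x ∧ A ω = a)
    (fun y => (Pr_congr p (fun ω => by tauto)).trans_ne (hposMY m y).ne')
    (fun y => (cPr_congr p (fun _ => Iff.rfl) (fun ω => by tauto)).trans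
      (h 1 m y x a ry (hposMY m y)))
  rw [cPr_congr p (F' := fun ω => (X ω = x ∧ A ω = a) ∧ RM ω = 1) (fun _ => Iff.rfl)
    fun _ => and_assoc.symm]
  refine cPr_eq_cPr_and_mul_div p ?_ ?_ hc ?_
  · exact pos_of_imp fun ω => by tauto
  · exact pos_of_imp fun ω => by tauto
  · rw [← hjoint]
    exact Pr_congr p fun ω => by tauto

/-- Density-tilting step in identification under Model S6. -/
theorem S6_density_tilting
    {Ω 𝒳 𝒜 ℳ 𝒴 : Type*} [Fintype Ω]
    (p : Ω → ℝ) (hp : ∀ ω, 0 ≤ p ω) (hsum : ∑ ω, p ω = 1)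
    (X : Ω → 𝒳) (A : Ω → 𝒜) (M : Ω → ℳ) (Y : Ω → 𝒴) (RM RY : Ω → ℕ)
    (hRM : ∀ ω, RM ω = 0 ∨ RM ω = 1) (hRY : ∀ ω, RY ω = 0 ∨ RY ω = 1)
    -- R_M ⫫ (M, Y) ∣ (X, A, R_Y)
    (h : ∀ (rm : ℕ) (m : ℳ) (y : 𝒴) (x : 𝒳) (a : 𝒜) (ry : ℕ),
      0 < Pr p (fun ω => M ω = m ∧ Y ω = y ∧ X ω = x ∧ A ω = a ∧ RY ω = ry) →
      cPr p (fun ω => RM ω = rm)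
          (fun ω => M ω = m ∧ Y ω = y ∧ X ω = x ∧ A ω = a ∧ RY ω = ry)
        = cPr p (fun ω => RM ω = rm) (fun ω => X ω = x ∧ A ω = a ∧ RY ω = ry)) :
    ∀ (ry : ℕ) (x : 𝒳) (a : 𝒜) (m : ℳ),
      0 < Pr p (fun ω => RM ω = 1 ∧ RY ω = ry ∧ X ω = x ∧ A ω = a) →
      (∀ (m' : ℳ) (y' : 𝒴),
        0 < Pr p (fun ω => M ω = m' ∧ Y ω = y' ∧ X ω = x ∧ A ω = a ∧ RY ω = ry)) →
      cPr p (fun ω => RY ω = ry ∧ M ω = m) (fun ω => X ω = x ∧ A ω = a)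
        = cPr p (fun ω => RY ω = ry ∧ M ω = m) (fun ω => X ω = x ∧ A ω = a ∧ RM ω = 1)
          * (cPr p (fun ω => RM ω = 1) (fun ω => X ω = x ∧ A ω = a)
            / cPr p (fun ω => RM ω = 1) (fun ω => X ω = x ∧ A ω = a ∧ RY ω = ry)) :=
  S6_density_tilting_general p hp X A M Y RM RY h
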